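/- arXiv:1702.05570 — 3 statements merged into one kernel-verified Lean document; each statement's English description precedes it below -/
import Mathlib

section
/- For every weighted graph G with at least 2 vertices, ι_2(G) = ι̃_2(G): the minimum of max{φ_G(A_1), φ_G(A_2)} over pairs of nonempty disjoint subsets A_1, A_2 equals the minimum over pairs with A_1 ∪ A_2 = V. (Given any disjoint pair, assigning each residue vertex to one of the two parts so as to form a partition does not increase the maximum conductance.) -/
open scoped Classical

noncomputable section
set_option linter.unusedSectionVars false

variable {V : Type} [Fintype V] [DecidableEq V]

/-- `c(∂A)`: total weight of edges of `G` with exactly one endpoint in `A`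
(each unordered edge counted once, as ordered pairs from `A` to its complement). -/
def cutG (G : SimpleGraph V) (c : V → V → ℚ) (A : Finset V) : ℚ :=
  ∑ u ∈ A, ∑ v ∈ Finset.univ \ A, if G.Adj u v then c u v else 0

/-- The conductance (edge expansion) `φ_G(A) = c(∂A)/ω(A)`. -/
def phiG (G : SimpleGraph V) (ω : V → ℚ) (c : V → V → ℚ) (A : Finset V) : ℚ :=
  cutG G c A / ∑ v ∈ A, ω v

/-- The `k`-th isoperimetric number `ι_k(G)`: the infimum over `k`-subpartitions
(families of `k` nonempty pairwise disjoint subsets of `V`) of the maximum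
conductance of the parts. -/
def iota (G : SimpleGraph V) (ω : V → ℚ) (c : V → V → ℚ) (k : ℕ) : ℝ :=
  sInf {x : ℝ | ∃ A : Fin k → Finset V, (∀ i, (A i).Nonempty) ∧
    (∀ i j, i ≠ j → Disjoint (A i) (A j)) ∧
    x = ⨆ i, ((phiG G ω c (A i) : ℚ) : ℝ)}

/-- The `k`-th minimum normalized cut number `ι̃_k(G)`: the infimum over
`k`-partitions (whose parts cover all of `V`) of the maximum conductance. -/
def iotaTilde (G : SimpleGraph V) (ω : V → ℚ) (c : V → V → ℚ) (k : ℕ) : ℝ :=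
  sInf {x : ℝ | ∃ A : Fin k → Finset V, (∀ i, (A i).Nonempty) ∧
    (∀ i j, i ≠ j → Disjoint (A i) (A j)) ∧
    Finset.univ.biUnion A = Finset.univ ∧
    x = ⨆ i, ((phiG G ω c (A i) : ℚ) : ℝ)}

/-- `ι^C_k(G)`: as `ι_k(G)`, but restricted to connected `k`-subpartitions. -/
def iotaC (G : SimpleGraph V) (ω : V → ℚ) (c : V → V → ℚ) (k : ℕ) : ℝ :=
  sInf {x : ℝ | ∃ A : Fin k → Finset V, (∀ i, (A i).Nonempty) ∧
    (∀ i j, i ≠ j → Disjoint (A i) (A j)) ∧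
    (∀ i, (G.induce ((A i : Finset V) : Set V)).Connected) ∧
    x = ⨆ i, ((phiG G ω c (A i) : ℚ) : ℝ)}

lemma cutG_nonneg (G : SimpleGraph V) (c : V → V → ℚ) (hc : ∀ u v, 0 ≤ c u v)
    (A : Finset V) : 0 ≤ cutG G c A := by
  refine Finset.sum_nonneg fun u _ => Finset.sum_nonneg fun v _ => ?_
  split <;> simp [hc]

lemma cutG_compl (G : SimpleGraph V) (c : V → V → ℚ) (hcs : ∀ u v, c u v = c v u)
    (A : Finset V) : cutG G c (Finset.univ \ A) = cutG G c A := by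
  unfold cutG
  rw [Finset.sdiff_sdiff_self_left, Finset.univ_inter, Finset.sum_comm]
  refine Finset.sum_congr rfl fun u _ => Finset.sum_congr rfl fun v _ => ?_
  rw [G.adj_comm, hcs]

lemma omega_pos (ω : V → ℚ) (hω : ∀ v, 0 < ω v) {A : Finset V} (hA : A.Nonempty) :
    0 < ∑ v ∈ A, ω v :=
  Finset.sum_pos (fun v _ => hω v) hA

lemma phiG_nonneg (G : SimpleGraph V) (ω : V → ℚ) (c : V → V → ℚ)
    (hω : ∀ v, 0 < ω v) (hc : ∀ u v, 0 ≤ c u v) {A : Finset V} (hA : A.Nonempty) :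
    (0:ℚ) ≤ phiG G ω c A :=
  div_nonneg (cutG_nonneg G c hc A) (omega_pos ω hω hA).le

lemma iSup_fin2 (f : Fin 2 → ℝ) : (⨆ i, f i) = max (f 0) (f 1) := by
  refine le_antisymm (ciSup_le fun i => ?_) (max_le (le_ciSup (Finite.bddAbove_range f) 0)
    (le_ciSup (Finite.bddAbove_range f) 1))
  fin_cases i
  · exact le_max_left _ _
  · exact le_max_right _ _

lemma key (G : SimpleGraph V) (ω : V → ℚ) (c : V → V → ℚ)
    (hω : ∀ v, 0 < ω v) (hc : ∀ u v, 0 ≤ c u v) (hcs : ∀ u v, c u v = c v u)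
    (A1 A2 : Finset V) (h1 : A1.Nonempty) (h2 : A2.Nonempty) (hd : Disjoint A1 A2)
    (hcut : cutG G c A1 ≤ cutG G c A2) :
    ∃ B : Fin 2 → Finset V, (∀ i, (B i).Nonempty) ∧
      (∀ i j, i ≠ j → Disjoint (B i) (B j)) ∧
      Finset.univ.biUnion B = Finset.univ ∧
      (⨆ i, ((phiG G ω c (B i) : ℚ) : ℝ)) ≤
        max ((phiG G ω c A1 : ℚ) : ℝ) ((phiG G ω c A2 : ℚ) : ℝ) := by
  have hsub : A2 ⊆ Finset.univ \ A1 :=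
    Finset.subset_sdiff.2 ⟨Finset.subset_univ _, hd.symm⟩
  refine ⟨![A1, Finset.univ \ A1], ?_, ?_, ?_, ?_⟩
  · intro i; fin_cases i
    · exact h1
    · exact h2.mono hsub
  · intro i j hij; fin_cases i <;> fin_cases j <;> simp_all
    · exact Finset.disjoint_sdiff
    · exact Finset.sdiff_disjoint
  · ext v; simp [Fin.exists_fin_two]; tauto
  · rw [iSup_fin2]
    simp only [Matrix.cons_val_zero, Matrix.cons_val_one, Matrix.head_cons]
    refine max_le (le_max_left _ _) (le_trans ?_ (le_max_right _ _))
    rw [Rat.cast_le]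
    unfold phiG
    rw [cutG_compl G c hcs]
    calc cutG G c A1 / ∑ v ∈ Finset.univ \ A1, ω v
        ≤ cutG G c A2 / ∑ v ∈ A2, ω v := by
          exact div_le_div₀ (cutG_nonneg G c hc A2) hcut (omega_pos ω hω h2)
            (Finset.sum_le_sum_of_subset_of_nonneg hsub fun v _ _ => (hω v).le)
      _ = _ := rfl

/-- `ι_2(G) = ι̃_2(G)` for every weighted graph with at least two
vertices (positive vertex weights, nonnegative edge weights). -/
theorem stmt5 (G : SimpleGraph V) (ω : V → ℚ) (c : V → V → ℚ)
    (hω : ∀ v, 0 < ω v) (hc : ∀ u v, 0 ≤ c u v)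
    (hcs : ∀ u v, c u v = c v u)
    (hV : 2 ≤ Fintype.card V) :
    iota G ω c 2 = iotaTilde G ω c 2 := by
  set S := {x : ℝ | ∃ A : Fin 2 → Finset V, (∀ i, (A i).Nonempty) ∧
    (∀ i j, i ≠ j → Disjoint (A i) (A j)) ∧
    x = ⨆ i, ((phiG G ω c (A i) : ℚ) : ℝ)} with hS
  set T := {x : ℝ | ∃ A : Fin 2 → Finset V, (∀ i, (A i).Nonempty) ∧
    (∀ i j, i ≠ j → Disjoint (A i) (A j)) ∧
    Finset.univ.biUnion A = Finset.univ ∧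
    x = ⨆ i, ((phiG G ω c (A i) : ℚ) : ℝ)} with hT
  have hTS : T ⊆ S := by
    rintro x ⟨A, hne, hdisj, _, hx⟩
    exact ⟨A, hne, hdisj, hx⟩
  have hSlb : ∀ x ∈ S, (0:ℝ) ≤ x := by
    rintro x ⟨A, hne, hdisj, hx⟩
    subst hx
    refine le_trans ?_ (le_ciSup (Finite.bddAbove_range _) 0)
    exact_mod_cast phiG_nonneg G ω c hω hc (hne 0)
  have hSbdd : BddBelow S := ⟨0, hSlb⟩
  have hTbdd : BddBelow T := ⟨0, fun x hx => hSlb x (hTS hx)⟩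
  obtain ⟨v0, w0, hvw⟩ := Fintype.exists_pair_of_one_lt_card (by omega : 1 < Fintype.card V)
  have hTne : T.Nonempty := by
    refine ⟨_, ![{v0}, Finset.univ \ {v0}], ?_, ?_, ?_, rfl⟩
    · intro i; fin_cases i
      · exact ⟨v0, Finset.mem_singleton_self v0⟩
      · exact ⟨w0, by simp [hvw.symm]⟩
    · intro i j hij; fin_cases i <;> fin_cases j <;>
        first
        | (simp only [Matrix.cons_val_zero, Matrix.cons_val_one, Matrix.head_cons]
           exact Finset.disjoint_sdiff)
        | (simp only [Matrix.cons_val_zero, Matrix.cons_val_one, Matrix.head_cons]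
           exact Finset.sdiff_disjoint)
        | simp at hij
    · ext v; simp [Fin.exists_fin_two]; tauto
  refine le_antisymm (csInf_le_csInf hSbdd hTne hTS) (le_csInf ⟨_, hTS hTne.choose_spec⟩ ?_)
  rintro x ⟨A, hne, hdisj, hx⟩
  have key' : ∃ y ∈ T, y ≤ x := by
    rcases le_total (cutG G c (A 0)) (cutG G c (A 1)) with hcut | hcut
    · obtain ⟨B, hBne, hBd, hBc, hBle⟩ := key G ω c hω hc hcs (A 0) (A 1) (hne 0) (hne 1)
        (hdisj 0 1 (by decide)) hcut
      refine ⟨_, ⟨B, hBne, hBd, hBc, rfl⟩, ?_⟩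
      rw [hx]; exact hBle.trans_eq (iSup_fin2 (fun i => ((phiG G ω c (A i) : ℚ) : ℝ))).symm
    · obtain ⟨B, hBne, hBd, hBc, hBle⟩ := key G ω c hω hc hcs (A 1) (A 0) (hne 1) (hne 0)
        (hdisj 1 0 (by decide)) hcut
      refine ⟨_, ⟨B, hBne, hBd, hBc, rfl⟩, ?_⟩
      rw [hx]
      exact hBle.trans_eq ((max_comm _ _).trans (iSup_fin2 (fun i => ((phiG G ω c (A i) : ℚ) : ℝ))).symm)
  obtain ⟨y, hyT, hyx⟩ := key'
  exact le_trans (csInf_le hTbdd hyT) hyx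
end
end

section
/- Let T be a rooted weighted tree, u a vertex with children u_1, …, u_d, ξ ≥ 0, k ≥ 1, l ≥ 0. If there exists a connected k-subpartition A of V(T_u) witnessing μ_ξ(u,k,l)=1 in which u lies in the residue, then there exist nonnegative integers k_1+⋯+k_d = k and l_1+⋯+l_d ≤ l−1 such that μ_ξ(u_i, k_i, l_i) = 1 for all i. Conversely, if such k_i, l_i exist with Σk_i = k and Σl_i = l−1, then μ_ξ(u,k,l) = 1. -/
open scoped Classical

noncomputable section

/-- A finite rooted weighted tree, encoded by a parent function. The root has an
auxiliary parent edge `e_root` of weight `0` (`parent root = root`). Edges are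
identified with their lower endpoints: the parent edge `e_v` of a vertex `v`
has weight `c v`. -/
structure RTree (V : Type) [Fintype V] [DecidableEq V] where
  root : V
  parent : V → V
  w : V → ℚ
  c : V → ℚ
  parent_root : parent root = root
  reaches_root : ∀ v : V, ∃ n : ℕ, parent^[n] v = root
  w_pos : ∀ v : V, 0 < w v
  c_pos : ∀ v : V, v ≠ root → 0 < c v
  c_root : c root = 0

namespace RTree

variable {V : Type} [Fintype V] [DecidableEq V] (T : RTree V)

/-- `v` lies in the subtree rooted at `u` (equivalently, edge `e_v ≤ e_u` in the
natural partial order induced by the root). -/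
def below (u v : V) : Prop := ∃ n : ℕ, T.parent^[n] v = u

/-- The vertex set of the subtree `T_u` (also of `T_{e_u}`). -/
def desc (u : V) : Finset V := Finset.univ.filter (fun v => T.below u v)

/-- Total vertex weight `ω(A)`. -/
def wsum (A : Finset V) : ℚ := ∑ v ∈ A, T.w v

/-- The (lower endpoints of) edges with exactly one endpoint in `A`, relative to a
ground set `W` of edges/vertices (`W = univ` gives the whole tree `T`). -/
def boundaryW (W A : Finset V) : Finset V :=
  W.filter (fun v => Xor' (v ∈ A) (T.parent v ∈ A))

/-- The edge boundary `∂A` in the whole tree. -/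
def boundary (A : Finset V) : Finset V := T.boundaryW Finset.univ A

/-- `c(∂A)` relative to ground set `W`. -/
def cutW (W A : Finset V) : ℚ := ∑ v ∈ T.boundaryW W A, T.c v

/-- `c(∂A)` in the whole tree. -/
def cut (A : Finset V) : ℚ := T.cutW Finset.univ A

/-- Vertex set of the subtree `T_u` relative to the ground set `W`. -/
def descW (W : Finset V) (u : V) : Finset V := T.desc u ∩ W

/-- `ε_ξ(e_v) = ξ·ω(T_{e_v}) + c(e_v)`. -/
def eps (ξ : ℚ) (v : V) : ℚ := ξ * T.wsum (T.desc v) + T.c v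

/-- `A` induces a connected subgraph (a subtree) of the tree: some `a ∈ A` is
reachable from every `v ∈ A` by a parent-chain staying inside `A`. -/
def connectedIn (A : Finset V) : Prop :=
  ∃ a ∈ A, ∀ v ∈ A, ∃ n : ℕ, T.parent^[n] v = a ∧ ∀ m : ℕ, m ≤ n → T.parent^[m] v ∈ A

/-- The children of a vertex. -/
def children (u : V) : Finset V :=
  Finset.univ.filter (fun v => T.parent v = u ∧ v ≠ u)

/-- `A` witnesses `μ_ξ(u,k,l) = 1` relative to ground set `W`: a connected
`k`-subpartition of `T_u` whose parts all have conductance at most `ξ`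
(boundaries computed in the ground set), with at most `l` residue vertices. -/
def muWitnessW (W : Finset V) (ξ : ℚ) (u : V) {k : ℕ} (A : Fin k → Finset V) (l : ℕ) : Prop :=
  (∀ i, (A i).Nonempty) ∧ (∀ i j, i ≠ j → Disjoint (A i) (A j)) ∧
  (∀ i, A i ⊆ T.descW W u) ∧ (∀ i, T.connectedIn (A i)) ∧
  (∀ i, T.cutW W (A i) / T.wsum (A i) ≤ ξ) ∧
  ((T.descW W u \ Finset.univ.biUnion A).card ≤ l)

/-- `μ_ξ(u,k,l) = 1` relative to ground set `W`. -/
def muW (W : Finset V) (ξ : ℚ) (u : V) (k l : ℕ) : Prop :=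
  ∃ A : Fin k → Finset V, T.muWitnessW W ξ u A l

/-- `A` witnesses `μ_ξ(u,k,l) = 1` (in the whole tree `T`). -/
def muWitness (ξ : ℚ) (u : V) {k : ℕ} (A : Fin k → Finset V) (l : ℕ) : Prop :=
  T.muWitnessW Finset.univ ξ u A l

/-- `μ_ξ(u,k,l) = 1`. -/
def mu (ξ : ℚ) (u : V) (k l : ℕ) : Prop := T.muW Finset.univ ξ u k l

/-- Membership in `𝒞_ξ(u,k,l)` relative to ground set `W`: a connected
`k`-subpartition of `T_u` with `u ∈ A₁`, residue at most `l`, and conductance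
at most `ξ` for every part other than `A₁`. -/
def inCW (W : Finset V) (ξ : ℚ) (u : V) {k : ℕ} (A : Fin k → Finset V) (l : ℕ) : Prop :=
  (∀ i, (A i).Nonempty) ∧ (∀ i j, i ≠ j → Disjoint (A i) (A j)) ∧
  (∀ i, A i ⊆ T.descW W u) ∧ (∀ i, T.connectedIn (A i)) ∧
  (∀ h : 0 < k, u ∈ A ⟨0, h⟩) ∧
  (∀ i : Fin k, i.val ≠ 0 → T.cutW W (A i) / T.wsum (A i) ≤ ξ) ∧
  ((T.descW W u \ Finset.univ.biUnion A).card ≤ l)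

/-- Membership in `𝒞_ξ(u,k,l)`. -/
def inC (ξ : ℚ) (u : V) {k : ℕ} (A : Fin k → Finset V) (l : ℕ) : Prop :=
  T.inCW Finset.univ ξ u A l

/-- `γ_ξ(𝒜) = Σ_{e ∈ ∂A₁ \ {e_u}} ε_ξ(e)` relative to ground set `W`. -/
def gammaValW (W : Finset V) (ξ : ℚ) (u : V) (A1 : Finset V) : ℚ :=
  ∑ v ∈ (T.boundaryW W A1).erase u, (ξ * T.wsum (T.descW W v) + T.c v)

/-- `γ_ξ(𝒜) = Σ_{e ∈ ∂A₁ \ {e_u}} ε_ξ(e)`. -/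
def gammaVal (ξ : ℚ) (u : V) (A1 : Finset V) : ℚ := T.gammaValW Finset.univ ξ u A1

/-- `Γ_ξ(u,k,l) = min over 𝒞_ξ(u,k,l) of γ_ξ`, with value `+∞` (`⊤` of `EReal`)
when `𝒞_ξ(u,k,l)` is empty, relative to ground set `W`. -/
def GammaW (W : Finset V) (ξ : ℚ) (u : V) (k l : ℕ) : EReal :=
  sInf {x : EReal | ∃ (h : 0 < k) (A : Fin k → Finset V),
    T.inCW W ξ u A l ∧ x = ((T.gammaValW W ξ u (A ⟨0, h⟩) : ℝ) : EReal)}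

/-- `Γ_ξ(u,k,l)`. -/
def Gamma (ξ : ℚ) (u : V) (k l : ℕ) : EReal := T.GammaW Finset.univ ξ u k l

end RTree
namespace RTree

variable {V : Type} [Fintype V] [DecidableEq V] (T : RTree V)

lemma iterate_root (n : ℕ) : T.parent^[n] T.root = T.root :=
  Function.iterate_fixed T.parent_root n

lemma eq_root_of_periodic {u : V} {p : ℕ} (hp : 0 < p) (h : T.parent^[p] u = u) :
    u = T.root := by
  obtain ⟨n, hn⟩ := T.reaches_root u
  have hmul : ∀ t : ℕ, T.parent^[p * t] u = u := by
    intro t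
    induction t with
    | zero => simp
    | succ t ih =>
      have : p * (t + 1) = p + p * t := by ring
      rw [this, Function.iterate_add_apply, ih, h]
  have hge : n ≤ p * n := Nat.le_mul_of_pos_left n hp
  have : T.parent^[p * n] u = T.root := by
    have : p * n = (p * n - n) + n := (Nat.sub_add_cancel hge).symm
    rw [this, Function.iterate_add_apply, hn, T.iterate_root]
  rw [hmul n] at this
  exact this

lemma mem_desc {u v : V} : v ∈ T.desc u ↔ T.below u v := by
  simp [desc]

lemma self_mem_desc (u : V) : u ∈ T.desc u := T.mem_desc.2 ⟨0, rfl⟩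

lemma mem_children {u v : V} : v ∈ T.children u ↔ T.parent v = u ∧ v ≠ u := by
  simp [children]

lemma desc_subset_of_child {u v : V} (hv : v ∈ T.children u) : T.desc v ⊆ T.desc u := by
  intro w hw
  obtain ⟨n, hn⟩ := T.mem_desc.1 hw
  refine T.mem_desc.2 ⟨n + 1, ?_⟩
  rw [Function.iterate_succ_apply', hn, (T.mem_children.1 hv).1]

lemma notMem_desc_child {u v : V} (hv : v ∈ T.children u) : u ∉ T.desc v := by
  obtain ⟨hpv, hne⟩ := T.mem_children.1 hv
  intro hmem
  obtain ⟨n, hn⟩ := T.mem_desc.1 hmem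
  have hper : T.parent^[n + 1] u = u := by
    rw [Function.iterate_succ_apply', hn, hpv]
  have hroot : u = T.root := T.eq_root_of_periodic (Nat.succ_pos n) hper
  apply hne
  rw [hroot] at hn ⊢
  rw [T.iterate_root] at hn
  exact hn.symm

lemma desc_child_disjoint_aux {u v v' : V} (hv : v ∈ T.children u) (hv' : v' ∈ T.children u)
    (hne : v ≠ v') {w : V} {n m : ℕ} (hnm : n ≤ m)
    (h1 : T.parent^[n] w = v) (h2 : T.parent^[m] w = v') : False := by
  obtain ⟨hpv, hvu⟩ := T.mem_children.1 hv
  obtain ⟨hpv', hv'u⟩ := T.mem_children.1 hv'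
  have h3 : T.parent^[m - n] v = v' := by
    rw [← h1, ← Function.iterate_add_apply, Nat.sub_add_cancel hnm, h2]
  rcases Nat.eq_or_lt_of_le hnm with heq | hlt
  · rw [heq] at h1; exact hne (h1.symm.trans h2)
  · have hpos : 0 < m - n := Nat.sub_pos_of_lt hlt
    have h4 : T.parent^[m - n - 1] u = v' := by
      rw [← Nat.sub_add_cancel hpos, Function.iterate_succ_apply, hpv] at h3
      exact h3
    have hper : T.parent^[(m - n - 1) + 1] u = u := by
      rw [Function.iterate_succ_apply', h4, hpv']
    have hroot : u = T.root := T.eq_root_of_periodic (Nat.succ_pos _) hper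
    apply hv'u
    rw [hroot] at h4 ⊢
    rw [T.iterate_root] at h4
    exact h4.symm

lemma desc_child_disjoint {u v v' : V} (hv : v ∈ T.children u) (hv' : v' ∈ T.children u)
    (hne : v ≠ v') : Disjoint (T.desc v) (T.desc v') := by
  rw [Finset.disjoint_left]
  intro w hw hw'
  obtain ⟨n, hn⟩ := T.mem_desc.1 hw
  obtain ⟨m, hm⟩ := T.mem_desc.1 hw'
  rcases le_total n m with h | h
  · exact T.desc_child_disjoint_aux hv hv' hne h hn hm
  · exact T.desc_child_disjoint_aux hv' hv hne.symm h hm hn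

lemma exists_child_of_mem_desc {u w : V} (hw : w ∈ T.desc u) (hne : w ≠ u) :
    ∃ v ∈ T.children u, w ∈ T.desc v := by
  obtain ⟨n, hn⟩ := T.mem_desc.1 hw
  have hP : ∃ n, T.parent^[n] w = u := ⟨n, hn⟩
  classical
  set N := Nat.find hP with hN
  have hNspec : T.parent^[N] w = u := Nat.find_spec hP
  have hNpos : 0 < N := Nat.pos_of_ne_zero fun h => hne (by simpa [h] using hNspec)
  refine ⟨T.parent^[N - 1] w, ?_, T.mem_desc.2 ⟨N - 1, rfl⟩⟩
  refine T.mem_children.2 ⟨?_, ?_⟩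
  · have h5 := hNspec
    rw [← Nat.sub_add_cancel hNpos, Function.iterate_succ_apply'] at h5
    exact h5
  · intro hcon
    exact Nat.find_min hP (Nat.sub_lt hNpos Nat.one_pos) hcon

lemma connected_subset_child {u : V} {A : Finset V} (hA : A.Nonempty)
    (hc : T.connectedIn A) (hsub : A ⊆ T.desc u) (hu : u ∉ A) :
    ∃ v ∈ T.children u, A ⊆ T.desc v := by
  obtain ⟨a, ha, hchain⟩ := hc
  have hau : a ≠ u := fun h => hu (h ▸ ha)
  obtain ⟨v, hv, hav⟩ := T.exists_child_of_mem_desc (hsub ha) hau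
  obtain ⟨n, hn⟩ := T.mem_desc.1 hav
  refine ⟨v, hv, fun w hw => ?_⟩
  obtain ⟨m, hm, -⟩ := hchain w hw
  refine T.mem_desc.2 ⟨n + m, ?_⟩
  rw [Function.iterate_add_apply, hm, hn]

lemma descW_univ (w : V) : T.descW Finset.univ w = T.desc w := Finset.inter_univ _

end RTree

/-- If some witness of `μ_ξ(u,k,l) = 1` puts `u` in the residue,
then there are `k_i` with `Σ k_i = k` and `l_i` with `Σ l_i ≤ l − 1` and
`μ_ξ(u_i,k_i,l_i) = 1` for all children `u_i` of `u`; conversely, if such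
`k_i, l_i` exist with `Σ k_i = k` and `Σ l_i = l − 1`, then `μ_ξ(u,k,l) = 1`.
(The conditions `Σ l_i ≤ l − 1` and `Σ l_i = l − 1` are written `Σ l_i + 1 ≤ l`
and `Σ l_i + 1 = l` to avoid truncated subtraction.) -/
theorem stmt10 {V : Type} [Fintype V] [DecidableEq V] (T : RTree V)
    (ξ : ℚ) (hξ : 0 ≤ ξ) (u : V) (k l : ℕ) (hk : 1 ≤ k) :
    ((∃ A : Fin k → Finset V, T.muWitness ξ u A l ∧ u ∉ Finset.univ.biUnion A) →
      ∃ f g : V → ℕ, (∑ v ∈ T.children u, f v) = k ∧ (∑ v ∈ T.children u, g v) + 1 ≤ l ∧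
        ∀ v ∈ T.children u, T.mu ξ v (f v) (g v)) ∧
    ((∃ f g : V → ℕ, (∑ v ∈ T.children u, f v) = k ∧ (∑ v ∈ T.children u, g v) + 1 = l ∧
        ∀ v ∈ T.children u, T.mu ξ v (f v) (g v)) → T.mu ξ u k l) := by
  constructor
  · -- Forward direction
    rintro ⟨A, ⟨hne, hdisj, hsub, hconn, hcut, hres⟩, huA⟩
    have key : ∀ i : Fin k, ∃ v ∈ T.children u, A i ⊆ T.desc v := by
      intro i
      refine T.connected_subset_child (hne i) (hconn i) ?_ ?_
      · have := hsub i
        rwa [T.descW_univ] at this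
      · exact fun h => huA (Finset.mem_biUnion.2 ⟨i, Finset.mem_univ i, h⟩)
    choose ch hch hchsub using key
    set I : V → Finset (Fin k) := fun v => Finset.univ.filter (fun i => ch i = v) with hI
    refine ⟨fun v => (I v).card,
      fun v => (T.desc v \ Finset.univ.biUnion A).card, ?_, ?_, ?_⟩
    · -- Σ f v = k
      have := Finset.card_eq_sum_card_fiberwise
        (f := ch) (s := (Finset.univ : Finset (Fin k))) (t := T.children u)
        (fun i _ => hch i)
      simpa [hI] using this.symm
    · -- residue bound
      set S : Finset V := (T.children u).biUnion
        (fun v => T.desc v \ Finset.univ.biUnion A) with hS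
      have huS : u ∉ S := by
        intro h
        obtain ⟨v, hv, hmem⟩ := Finset.mem_biUnion.1 h
        exact T.notMem_desc_child hv (Finset.mem_sdiff.1 hmem).1
      have hcardS : S.card = ∑ v ∈ T.children u, (T.desc v \ Finset.univ.biUnion A).card := by
        refine Finset.card_biUnion ?_
        intro v hv v' hv' hvv'
        exact Finset.disjoint_of_subset_left Finset.sdiff_subset
          (Finset.disjoint_of_subset_right Finset.sdiff_subset
            (T.desc_child_disjoint hv hv' hvv'))
      have hsubS : insert u S ⊆ T.descW Finset.univ u \ Finset.univ.biUnion A := by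
        intro w hw
        rw [T.descW_univ]
        rcases Finset.mem_insert.1 hw with h | hw
        · rw [h]
          exact Finset.mem_sdiff.2 ⟨T.self_mem_desc u, huA⟩
        · obtain ⟨v, hv, hmem⟩ := Finset.mem_biUnion.1 hw
          obtain ⟨h1, h2⟩ := Finset.mem_sdiff.1 hmem
          exact Finset.mem_sdiff.2 ⟨T.desc_subset_of_child hv h1, h2⟩
      calc (∑ v ∈ T.children u, (T.desc v \ Finset.univ.biUnion A).card) + 1
          = (insert u S).card := by
            rw [Finset.card_insert_of_notMem huS, hcardS]
        _ ≤ (T.descW Finset.univ u \ Finset.univ.biUnion A).card :=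
            Finset.card_le_card hsubS
        _ ≤ l := hres
    · -- μ for each child
      intro v hv
      set e := (I v).equivFin.symm with he
      refine ⟨fun j => A (e j).1, ?_, ?_, ?_, ?_, ?_, ?_⟩
      · intro j; exact hne _
      · intro i j hij
        refine hdisj _ _ (fun h => hij ?_)
        have : (e i) = (e j) := Subtype.ext h
        exact e.injective this
      · intro j
        rw [T.descW_univ]
        have hj : ch (e j).1 = v := (Finset.mem_filter.1 (e j).2).2
        have := hchsub (e j).1
        rwa [hj] at this
      · intro j; exact hconn _
      · intro j; exact hcut _
      · -- residue for child v
        rw [T.descW_univ]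
        refine Finset.card_le_card ?_
        intro w hw
        obtain ⟨h1, h2⟩ := Finset.mem_sdiff.1 hw
        refine Finset.mem_sdiff.2 ⟨h1, fun hmem => ?_⟩
        obtain ⟨i, -, hwi⟩ := Finset.mem_biUnion.1 hmem
        by_cases hchi : ch i = v
        · apply h2
          refine Finset.mem_biUnion.2 ⟨(I v).equivFin ⟨i, ?_⟩, Finset.mem_univ _, ?_⟩
          · simp [hI, hchi]
          · have : e ((I v).equivFin ⟨i, by simp [hI, hchi]⟩) = ⟨i, by simp [hI, hchi]⟩ :=
              (I v).equivFin.symm_apply_apply _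
            rw [this]
            exact hwi
        · have hd := T.desc_child_disjoint (hch i) hv hchi
          exact Finset.disjoint_left.1 hd (hchsub i hwi) h1
  · -- Converse direction
    rintro ⟨f, g, hsumk, hsuml, hmu⟩
    have hB : ∀ v : {x // x ∈ T.children u}, ∃ B : Fin (f v.1) → Finset V,
        T.muWitnessW Finset.univ ξ v.1 B (g v.1) := fun v => hmu v.1 v.2
    choose B hBspec using hB
    have hcard : Fintype.card (Σ v : {x // x ∈ T.children u}, Fin (f v.1)) = k := by
      rw [Fintype.card_sigma]
      simp only [Fintype.card_fin]
      rw [← hsumk]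
      exact Finset.sum_attach _ _
    set e : (Σ v : {x // x ∈ T.children u}, Fin (f v.1)) ≃ Fin k :=
      Fintype.equivFinOfCardEq hcard with he
    refine ⟨fun i => B (e.symm i).1 (e.symm i).2, ?_, ?_, ?_, ?_, ?_, ?_⟩
    · intro i; exact (hBspec (e.symm i).1).1 _
    · have Fdisj : ∀ s t : (Σ v : {x // x ∈ T.children u}, Fin (f v.1)), s ≠ t →
          Disjoint (B s.1 s.2) (B t.1 t.2) := by
        rintro ⟨v1, a⟩ ⟨v2, b⟩ hst
        by_cases hv : v1 = v2
        · subst hv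
          have hab : a ≠ b := fun h => hst (by rw [h])
          exact (hBspec v1).2.1 a b hab
        · have hsub1 : B v1 a ⊆ T.desc v1.1 := by
            have := (hBspec v1).2.2.1 a
            rwa [T.descW_univ] at this
          have hsub2 : B v2 b ⊆ T.desc v2.1 := by
            have := (hBspec v2).2.2.1 b
            rwa [T.descW_univ] at this
          have hd := T.desc_child_disjoint v1.2 v2.2 (fun h => hv (Subtype.ext h))
          exact Finset.disjoint_of_subset_left hsub1
            (Finset.disjoint_of_subset_right hsub2 hd)
      intro i j hij
      exact Fdisj _ _ (fun h => hij (e.symm.injective h))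
    · intro i
      rw [T.descW_univ]
      have h1 : B (e.symm i).1 (e.symm i).2 ⊆ T.desc (e.symm i).1 := by
        have := (hBspec (e.symm i).1).2.2.1 (e.symm i).2
        rwa [T.descW_univ] at this
      exact h1.trans (T.desc_subset_of_child (e.symm i).1.2)
    · intro i; exact (hBspec (e.symm i).1).2.2.2.1 _
    · intro i; exact (hBspec (e.symm i).1).2.2.2.2.1 _
    · -- residue
      rw [T.descW_univ]
      have hsubres : T.desc u \ Finset.univ.biUnion (fun i => B (e.symm i).1 (e.symm i).2) ⊆
          insert u ((T.children u).attach.biUnion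
            (fun v => T.desc v.1 \ Finset.univ.biUnion (B v))) := by
        intro w hw
        obtain ⟨h1, h2⟩ := Finset.mem_sdiff.1 hw
        by_cases hwu : w = u
        · exact Finset.mem_insert.2 (Or.inl hwu)
        · obtain ⟨v, hv, hwv⟩ := T.exists_child_of_mem_desc h1 hwu
          refine Finset.mem_insert.2 (Or.inr (Finset.mem_biUnion.2
            ⟨⟨v, hv⟩, Finset.mem_attach _ _, Finset.mem_sdiff.2 ⟨hwv, fun hmem => ?_⟩⟩))
          obtain ⟨a, -, hwa⟩ := Finset.mem_biUnion.1 hmem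
          apply h2
          refine Finset.mem_biUnion.2 ⟨e ⟨⟨v, hv⟩, a⟩, Finset.mem_univ _, ?_⟩
          rw [e.symm_apply_apply]
          exact hwa
      calc (T.desc u \ Finset.univ.biUnion (fun i => B (e.symm i).1 (e.symm i).2)).card
          ≤ (insert u ((T.children u).attach.biUnion
              (fun v => T.desc v.1 \ Finset.univ.biUnion (B v)))).card :=
            Finset.card_le_card hsubres
        _ ≤ ((T.children u).attach.biUnion
              (fun v => T.desc v.1 \ Finset.univ.biUnion (B v))).card + 1 :=
            Finset.card_insert_le _ _
        _ ≤ (∑ v ∈ (T.children u).attach,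
              (T.desc v.1 \ Finset.univ.biUnion (B v)).card) + 1 :=
            Nat.add_le_add_right (Finset.card_biUnion_le) 1
        _ ≤ (∑ v ∈ (T.children u).attach, g v.1) + 1 := by
            refine Nat.add_le_add_right (Finset.sum_le_sum fun v _ => ?_) 1
            have := (hBspec v).2.2.2.2.2
            rwa [T.descW_univ] at this
        _ = (∑ v ∈ T.children u, g v) + 1 := by rw [Finset.sum_attach]
        _ = l := hsuml
end
end

section
/- Reduction of CMSC with forced residue to a forest: Let G = (V,E,ω,c) be a weighted graph and S_1 ⊆ V such that G − S_1 is a forest F. Define potentials p(v) = Σ_{e ∈ E(\{v\}, S_1)} c(e) for v ∈ V \ S_1. Then for any connected κ-subpartition {A_i} of V with S_1 contained in the residue, each A_i is a connected subset of F and c_G(∂_G A_i)/ω(A_i) = (c_F(∂_F A_i) + p(A_i))/ω(A_i), where p(A_i) = Σ_{v∈A_i} p(v). Consequently, G admits a connected κ-subpartition with all conductances ≤ ξ, residue ≤ λ and S_1 ⊆ residue, if and only if F with potentials p admits a connected κ-subpartition with all potential-adjusted conductances ≤ ξ and residue ≤ λ − |S_1|. -/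
open scoped Classical

noncomputable section

variable {V : Type} [Fintype V] [DecidableEq V]

/-- The graph `F = G − S₁` obtained by deleting the vertices of `S₁` (kept on
the same vertex set, with the vertices of `S₁` isolated). -/
def delVerts (G : SimpleGraph V) (S1 : Finset V) : SimpleGraph V where
  Adj u v := G.Adj u v ∧ u ∉ S1 ∧ v ∉ S1
  symm := by
    constructor
    intro u v h
    exact ⟨h.1.symm, h.2.2, h.2.1⟩
  loopless := by
    constructor
    intro v h
    exact G.loopless.irrefl v h.1

/-- `c(∂_H A)`: total weight of edges of `H` with exactly one endpoint in `A`. -/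
def cutIn (H : SimpleGraph V) (c : V → V → ℚ) (A : Finset V) : ℚ :=
  ∑ u ∈ A, ∑ v ∈ Finset.univ \ A, if H.Adj u v then c u v else 0

/-- The potential `p(v) = Σ_{e ∈ E({v},S₁)} c(e)`. -/
def pot (G : SimpleGraph V) (c : V → V → ℚ) (S1 : Finset V) (v : V) : ℚ :=
  ∑ s ∈ S1, if G.Adj v s then c v s else 0

/-- `A` induces a connected subgraph of `H`. -/
def connIn (H : SimpleGraph V) (A : Finset V) : Prop :=
  (H.induce ((A : Finset V) : Set V)).Connected

section Connectivity

variable {W : Type} {G : SimpleGraph W} {S1 A : Finset W}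

lemma induce_delVerts_of_disjoint (hA : Disjoint A S1) :
    (delVerts G S1).induce (A : Set W) = G.induce (A : Set W) := by
  ext ⟨a, ha⟩ ⟨b, hb⟩
  simp only [SimpleGraph.comap_adj, Function.Embedding.coe_subtype, delVerts]
  exact ⟨fun h => h.1,
    fun h => ⟨h, Finset.disjoint_left.1 hA ha, Finset.disjoint_left.1 hA hb⟩⟩

lemma connIn_delVerts_iff (hA : Disjoint A S1) : connIn (delVerts G S1) A ↔ connIn G A := by
  rw [connIn, connIn, induce_delVerts_of_disjoint hA]

end Connectivity

lemma subset_univ_sdiff_iff_disjoint {A S : Finset V} : A ⊆ Finset.univ \ S ↔ Disjoint A S := by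
  rw [← Finset.compl_eq_univ_sdiff, Finset.subset_compl_iff_disjoint_right]

lemma cutIn_eq_cutIn_delVerts_add_pot {G : SimpleGraph V} {S1 A : Finset V} (c : V → V → ℚ)
    (hA : Disjoint A S1) :
    cutIn G c A = cutIn (delVerts G S1) c A + ∑ v ∈ A, pot G c S1 v := by
  rw [cutIn, cutIn, ← Finset.sum_add_distrib]
  refine Finset.sum_congr rfl fun u hu => ?_
  have hu : u ∉ S1 := Finset.disjoint_left.1 hA hu
  -- every edge from `A` to `S₁` leaves `A`, and these are exactly the `G`-edges missing in `F`
  have hS1 : S1 ⊆ Finset.univ \ A := subset_univ_sdiff_iff_disjoint.2 hA.symm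
  have no_F_edges : ∑ v ∈ S1, (if (delVerts G S1).Adj u v then c u v else 0) = 0 :=
    Finset.sum_eq_zero fun v hv => if_neg fun h => h.2.2 hv
  have same_edges_off_S1 : ∀ v ∈ (Finset.univ \ A) \ S1,
      (if G.Adj u v then c u v else 0) = if (delVerts G S1).Adj u v then c u v else 0 :=
    fun v hv => by simp [delVerts, hu, (Finset.mem_sdiff.1 hv).2]
  rw [← Finset.sum_sdiff hS1, ← Finset.sum_sdiff hS1, pot, no_F_edges,
    Finset.sum_congr rfl same_edges_off_S1, add_zero]

lemma subset_residue_iff {κ : ℕ} {S1 : Finset V} {A : Fin κ → Finset V} :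
    S1 ⊆ Finset.univ \ Finset.univ.biUnion A ↔ ∀ i, Disjoint (A i) S1 := by
  simp [subset_univ_sdiff_iff_disjoint, Finset.disjoint_biUnion_right, disjoint_comm]

lemma card_residue_eq {κ : ℕ} {S1 : Finset V} {A : Fin κ → Finset V}
    (hA : ∀ i, Disjoint (A i) S1) :
    (Finset.univ \ Finset.univ.biUnion A).card =
      ((Finset.univ \ S1) \ Finset.univ.biUnion A).card + S1.card := by
  rw [sdiff_right_comm, Finset.card_sdiff_add_card_eq_card]
  exact subset_residue_iff.2 hA

theorem stmt16_general (G : SimpleGraph V) (ω : V → ℚ) (c : V → V → ℚ)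
    (S1 : Finset V) :
    (∀ (κ : ℕ) (A : Fin κ → Finset V),
      (∀ i, (A i).Nonempty) → (∀ i j, i ≠ j → Disjoint (A i) (A j)) →
      (∀ i, connIn G (A i)) → S1 ⊆ Finset.univ \ Finset.univ.biUnion A →
      ∀ i, A i ⊆ Finset.univ \ S1 ∧ connIn (delVerts G S1) (A i) ∧
        cutIn G c (A i) = cutIn (delVerts G S1) c (A i) + ∑ v ∈ A i, pot G c S1 v) ∧
    (∀ (κ lam : ℕ) (ξ : ℚ), 1 ≤ κ → 0 ≤ ξ →
      ((∃ A : Fin κ → Finset V, (∀ i, (A i).Nonempty) ∧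
          (∀ i j, i ≠ j → Disjoint (A i) (A j)) ∧
          (∀ i, connIn G (A i)) ∧
          (∀ i, cutIn G c (A i) / ∑ v ∈ A i, ω v ≤ ξ) ∧
          S1 ⊆ Finset.univ \ Finset.univ.biUnion A ∧
          (Finset.univ \ Finset.univ.biUnion A).card ≤ lam) ↔
       (∃ A : Fin κ → Finset V, (∀ i, (A i).Nonempty) ∧
          (∀ i j, i ≠ j → Disjoint (A i) (A j)) ∧
          (∀ i, A i ⊆ Finset.univ \ S1) ∧
          (∀ i, connIn (delVerts G S1) (A i)) ∧
          (∀ i, (cutIn (delVerts G S1) c (A i) + ∑ v ∈ A i, pot G c S1 v) /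
              ∑ v ∈ A i, ω v ≤ ξ) ∧
          ((((Finset.univ \ S1) \ Finset.univ.biUnion A).card : ℤ) ≤
            (lam : ℤ) - (S1.card : ℤ))))) := by
  refine ⟨fun κ A _ _ hconn hS i => ?_, fun κ lam ξ _ _ => ⟨?_, ?_⟩⟩
  · have hA := subset_residue_iff.1 hS i
    exact ⟨subset_univ_sdiff_iff_disjoint.2 hA, (connIn_delVerts_iff hA).2 (hconn i),
      cutIn_eq_cutIn_delVerts_add_pot c hA⟩
  · rintro ⟨A, hne, hdisj, hconn, hcond, hS, hcard⟩
    have hA := subset_residue_iff.1 hS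
    have hres := card_residue_eq hA
    refine ⟨A, hne, hdisj, fun i => subset_univ_sdiff_iff_disjoint.2 (hA i),
      fun i => (connIn_delVerts_iff (hA i)).2 (hconn i),
      fun i => cutIn_eq_cutIn_delVerts_add_pot c (hA i) ▸ hcond i, by omega⟩
  · rintro ⟨A, hne, hdisj, hsub, hconn, hcond, hcard⟩
    have hA i := subset_univ_sdiff_iff_disjoint.1 (hsub i)
    have hres := card_residue_eq hA
    refine ⟨A, hne, hdisj, fun i => (connIn_delVerts_iff (hA i)).1 (hconn i),
      fun i => (cutIn_eq_cutIn_delVerts_add_pot c (hA i)).symm ▸ hcond i,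
      subset_residue_iff.2 hA, by omega⟩

/-- reduction of CMSC with forced residue to a forest: if
`G − S₁` is a forest `F` and `p(v) = Σ_{e ∈ E({v},S₁)} c(e)`, then (i) for any
connected `κ`-subpartition `{A_i}` of `V` with `S₁` contained in the residue,
each `A_i` is a connected subset of `F` and
`c_G(∂_G A_i) = c_F(∂_F A_i) + p(A_i)`; and (ii) `G` admits a connected
`κ`-subpartition with all conductances ≤ `ξ`, residue ≤ `λ` and `S₁ ⊆` residue
iff `F` with potentials `p` admits a connected `κ`-subpartition with all
potential-adjusted conductances ≤ `ξ` and residue ≤ `λ − |S₁|`. -/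
theorem stmt16 (G : SimpleGraph V) (ω : V → ℚ) (c : V → V → ℚ)
    (hω : ∀ v, 0 < ω v) (hc : ∀ u v, 0 ≤ c u v) (hcs : ∀ u v, c u v = c v u)
    (S1 : Finset V) (hforest : (delVerts G S1).IsAcyclic) :
    (∀ (κ : ℕ) (A : Fin κ → Finset V),
      (∀ i, (A i).Nonempty) → (∀ i j, i ≠ j → Disjoint (A i) (A j)) →
      (∀ i, connIn G (A i)) → S1 ⊆ Finset.univ \ Finset.univ.biUnion A →
      ∀ i, A i ⊆ Finset.univ \ S1 ∧ connIn (delVerts G S1) (A i) ∧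
        cutIn G c (A i) = cutIn (delVerts G S1) c (A i) + ∑ v ∈ A i, pot G c S1 v) ∧
    (∀ (κ lam : ℕ) (ξ : ℚ), 1 ≤ κ → 0 ≤ ξ →
      ((∃ A : Fin κ → Finset V, (∀ i, (A i).Nonempty) ∧
          (∀ i j, i ≠ j → Disjoint (A i) (A j)) ∧
          (∀ i, connIn G (A i)) ∧
          (∀ i, cutIn G c (A i) / ∑ v ∈ A i, ω v ≤ ξ) ∧
          S1 ⊆ Finset.univ \ Finset.univ.biUnion A ∧
          (Finset.univ \ Finset.univ.biUnion A).card ≤ lam) ↔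
       (∃ A : Fin κ → Finset V, (∀ i, (A i).Nonempty) ∧
          (∀ i j, i ≠ j → Disjoint (A i) (A j)) ∧
          (∀ i, A i ⊆ Finset.univ \ S1) ∧
          (∀ i, connIn (delVerts G S1) (A i)) ∧
          (∀ i, (cutIn (delVerts G S1) c (A i) + ∑ v ∈ A i, pot G c S1 v) /
              ∑ v ∈ A i, ω v ≤ ξ) ∧
          ((((Finset.univ \ S1) \ Finset.univ.biUnion A).card : ℤ) ≤
            (lam : ℤ) - (S1.card : ℤ))))) :=
  stmt16_general G ω c S1
end
end
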